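/- arXiv:2310.15667 — 8 statements merged into one kernel-verified Lean document; each statement's English description precedes it below -/
import Mathlib

section
/- Let q ∈ ℂ with q ≠ 0, ω = q − q⁻¹, and fix a parity function [·] : {1,…,N} → {0,1}. Define Š ∈ End(ℂ^N ⊗ ℂ^N) by Š = Σ_{i,k} s_{ik} e^{ik}_{ik} + Σ_{i≠j} (-1)^{[i][j]} e^{ij}_{ji}, where s_{ik} = ω if i < k, s_{ii} = (-1)^{[i]} q^{(-1)^{[i]}}, and s_{ik} = 0 if i > k (here e^{ij}_{kl}(v_a ⊗ v_b) = δ_{ka} δ_{lb} v_i ⊗ v_j). Then Š satisfies the Hecke condition Š² = ω Š + 1. -/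
open Matrix

/-- The scalar `s_{ik}`: `ω` if `i < k`, `(-1)^{[i]} q^{(-1)^{[i]}}` if `i = k`,
`0` if `i > k`. -/
noncomputable def sEnt (N : ℕ) (p : Fin N → ℕ) (q : ℂ) (i k : Fin N) : ℂ :=
  if i < k then q - q⁻¹
  else if i = k then ((-1 : ℂ)) ^ (p i) * (if p i % 2 = 0 then q else q⁻¹)
  else 0

/-- The GL-type graded braid matrix
`Š = Σ_{i,k} s_{ik} e^{ik}_{ik} + Σ_{i≠j} (-1)^{[i][j]} e^{ij}_{ji}`. -/
noncomputable def braidS (N : ℕ) (p : Fin N → ℕ) (q : ℂ) :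
    Matrix (Fin N × Fin N) (Fin N × Fin N) ℂ :=
  fun r c =>
    (if r = c then sEnt N p q r.1 r.2 else 0) +
    (if r.1 = c.2 ∧ r.2 = c.1 ∧ r.1 ≠ r.2 then ((-1 : ℂ)) ^ (p r.1 * p r.2) else 0)

lemma braid_sum_collapse {N : ℕ} (f : Fin N → Fin N → ℂ) (d c : Fin N) :
    (∑ x : Fin N, ∑ y : Fin N, if x = d then if y = c then f x y else 0 else 0) = f d c := by
  rw [Finset.sum_comm]
  simp [Finset.sum_ite_eq', Finset.sum_ite_eq]

lemma sEnt_lt {N : ℕ} {p : Fin N → ℕ} {q : ℂ} {i k : Fin N} (h : i < k) :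
    sEnt N p q i k = q - q⁻¹ := by simp [sEnt, h]

lemma sEnt_gt {N : ℕ} {p : Fin N → ℕ} {q : ℂ} {i k : Fin N} (h : k < i) :
    sEnt N p q i k = 0 := by simp [sEnt, not_lt_of_gt h, (ne_of_gt h)]

lemma sEnt_diag {N : ℕ} {p : Fin N → ℕ} {q : ℂ} (i : Fin N) :
    sEnt N p q i i = ((-1 : ℂ)) ^ (p i) * (if p i % 2 = 0 then q else q⁻¹) := by
  simp [sEnt]

/-- the GL-type graded braid matrix satisfies the Hecke condition
`Š² = ω Š + 1` with `ω = q − q⁻¹`. -/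
theorem braidS_hecke (N : ℕ) (hN : 1 ≤ N) (p : Fin N → ℕ) (hp : ∀ i, p i ≤ 1)
    (q : ℂ) (hq : q ≠ 0) :
    braidS N p q * braidS N p q = (q - q⁻¹) • braidS N p q + 1 := by
  ext ⟨a,b⟩ ⟨c,d⟩
  simp only [Matrix.mul_apply, braidS, Fintype.sum_prod_type, add_mul, mul_add,
    Finset.sum_add_distrib, ite_mul, mul_ite, zero_mul, mul_zero, Prod.mk.injEq,
    ite_and, Finset.sum_ite_eq, Finset.sum_ite_eq', Finset.mem_univ, if_true,
    Matrix.add_apply, Matrix.smul_apply, Matrix.one_apply, smul_eq_mul, smul_ite, smul_zero,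
    braid_sum_collapse]
  rcases lt_trichotomy a b with hab|hab|hab <;>
  rcases eq_or_ne a c with h1|h1 <;> rcases eq_or_ne b d with h2|h2 <;>
  rcases eq_or_ne a d with h3|h3 <;> rcases eq_or_ne b c with h4|h4 <;>
    simp_all [sEnt_lt, sEnt_gt, sEnt_diag, ne_of_gt, ne_of_lt, Nat.mul_comm,
      ← mul_pow] <;>
    (try rcases Nat.le_one_iff_eq_zero_or_eq_one.mp (hp a) with hpa|hpa) <;>
    (try rcases Nat.le_one_iff_eq_zero_or_eq_one.mp (hp b) with hpb|hpb) <;>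
    simp_all <;> field_simp <;> ring
end

section
/- Let Š be as in the Hecke-condition setup (the GL-type graded braid matrix). Then Š satisfies the braid relation Š₁₂ Š₂₃ Š₁₂ = Š₂₃ Š₁₂ Š₂₃ in End(ℂ^N ⊗ ℂ^N ⊗ ℂ^N), where Š₁₂ = Š ⊗ id and Š₂₃ = id ⊗ Š. -/
/-!
Row `(i, j, k)` of `Š₁₂` is `s_ij e_ijk + g_ij e_jik` and row `(i, j, k)` of `Š₂₃` is
`s_jk e_ijk + g_jk e_ikj`, where `s` is the diagonal part of `Š` and `g` its signs on the flip.
Expanding row `(i, j, k)` of both sides of the braid relation gives combinations of the six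
permutations of `e_ijk`, and comparing coefficients needs only the Hecke relation
`s_ii² = ω s_ii + 1` on the diagonal, `s_ij = ω` above and `0` below it, `g_ii = 0` and
`g_ij g_ji = 1` for `i ≠ j`. The grading enters only through the last identity.
-/

open Matrix

/-- `Š ⊗ id` on the triple tensor power. -/
noncomputable def S12 (N : ℕ) (p : Fin N → ℕ) (q : ℂ) :
    Matrix (Fin N × Fin N × Fin N) (Fin N × Fin N × Fin N) ℂ :=
  fun r c => braidS N p q (r.1, r.2.1) (c.1, c.2.1) * (if r.2.2 = c.2.2 then 1 else 0)

/-- `id ⊗ Š` on the triple tensor power. -/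
noncomputable def S23 (N : ℕ) (p : Fin N → ℕ) (q : ℂ) :
    Matrix (Fin N × Fin N × Fin N) (Fin N × Fin N × Fin N) ℂ :=
  fun r c => (if r.1 = c.1 then 1 else 0) * braidS N p q r.2 c.2

section GLBraid

variable {ι R : Type*} [CommRing R]

def glBraidMatrix [DecidableEq ι] (s g : ι → ι → R) : Matrix (ι × ι) (ι × ι) R :=
  of fun r c => (if c = r then s r.1 r.2 else 0) + (if c = r.swap then g r.1 r.2 else 0)

def onFactors12 [DecidableEq ι] (A : Matrix (ι × ι) (ι × ι) R) :
    Matrix (ι × ι × ι) (ι × ι × ι) R :=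
  of fun r c => A (r.1, r.2.1) (c.1, c.2.1) * (if r.2.2 = c.2.2 then 1 else 0)

def onFactors23 [DecidableEq ι] (A : Matrix (ι × ι) (ι × ι) R) :
    Matrix (ι × ι × ι) (ι × ι × ι) R :=
  of fun r c => (if r.1 = c.1 then 1 else 0) * A r.2 c.2

section Rows

variable [Fintype ι] [DecidableEq ι]

theorem single_vecMul_onFactors12_glBraidMatrix (s g : ι → ι → R) (i j k : ι) :
    Pi.single (i, j, k) 1 ᵥ* onFactors12 (glBraidMatrix s g) =
      s i j • Pi.single (i, j, k) 1 + g i j • Pi.single (j, i, k) 1 := by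
  ext ⟨a, b, c⟩
  simp only [single_vecMul, onFactors12, glBraidMatrix, of_row, of_apply, Pi.add_apply,
    Pi.smul_apply, Pi.single_apply, Prod.ext_iff, Prod.fst_swap, Prod.snd_swap, smul_eq_mul]
  grind

theorem single_vecMul_onFactors23_glBraidMatrix (s g : ι → ι → R) (i j k : ι) :
    Pi.single (i, j, k) 1 ᵥ* onFactors23 (glBraidMatrix s g) =
      s j k • Pi.single (i, j, k) 1 + g j k • Pi.single (i, k, j) 1 := by
  ext ⟨a, b, c⟩
  simp only [single_vecMul, onFactors23, glBraidMatrix, of_row, of_apply, Pi.add_apply,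
    Pi.smul_apply, Pi.single_apply, Prod.ext_iff, Prod.fst_swap, Prod.snd_swap, smul_eq_mul]
  grind

end Rows

variable [LinearOrder ι] {ω : R} {s g : ι → ι → R}

/- In row `(i, j, k)` of both sides of the braid relation, the coefficients of `e_kij`, `e_jki`,
`e_kji` agree on the nose; those of `e_ijk`, `e_jik`, `e_ikj` are compared by the next three
identities. -/
theorem glBraid_coeff_id (hs_lt : ∀ ⦃i j⦄, i < j → s i j = ω)
    (hs_gt : ∀ ⦃i j⦄, j < i → s i j = 0)
    (hs_diag : ∀ i, s i i * s i i = ω * s i i + 1) (hg_diag : ∀ i, g i i = 0)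
    (hg : ∀ ⦃i j⦄, i ≠ j → g i j * g j i = 1) (i j k : ι) :
    s i j * (s j k * s i j) + g i j * (s i k * g j i)
      = s j k * (s i j * s j k) + g j k * (s i k * g k j) := by
  rcases eq_or_ne i j with rfl | hij
  · rcases eq_or_ne i k with rfl | hik
    · ring
    rw [hg_diag]
    rcases hik.lt_or_gt with h | h
    · rw [hs_lt h]
      linear_combination ω * hs_diag i - ω * hg hik
    · rw [hs_gt h]; ring
  rcases eq_or_ne j k with rfl | hjk
  · rw [hg_diag]
    rcases hij.lt_or_gt with h | h
    · rw [hs_lt h]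
      linear_combination ω * hg hij - ω * hs_diag j
    · rw [hs_gt h]; ring
  have : s i j * s j k * (s i j - s j k) = 0 := by
    rcases hij.lt_or_gt with h1 | h1 <;> rcases hjk.lt_or_gt with h2 | h2 <;>
      simp only [hs_lt, hs_gt, h1, h2, sub_self, mul_zero, zero_mul]
  linear_combination this + s i k * hg hij - s i k * hg hjk

theorem glBraid_coeff_swap12 (hs_lt : ∀ ⦃i j⦄, i < j → s i j = ω)
    (hs_gt : ∀ ⦃i j⦄, j < i → s i j = 0) (hg_diag : ∀ i, g i i = 0) (i j k : ι) :
    s i j * (s j k * g i j) + g i j * (s i k * s j i) = s j k * (g i j * s i k) := by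
  rcases eq_or_ne i j with rfl | hij
  · rw [hg_diag]; ring
  have : s i j * s j k + s i k * s j i = s j k * s i k := by
    rcases hij.lt_or_gt with hij | hij
    · rw [hs_lt hij, hs_gt hij]
      rcases lt_trichotomy j k with hjk | rfl | hjk
      · rw [hs_lt hjk, hs_lt (hij.trans hjk)]; ring
      · rw [hs_lt hij]; ring
      · rw [hs_gt hjk]; ring
    · rw [hs_gt hij, hs_lt hij]
      rcases lt_trichotomy i k with hik | rfl | hik
      · rw [hs_lt hik, hs_lt (hij.trans hik)]; ring
      · rw [hs_lt hij]; ring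
      · rw [hs_gt hik]; ring
  linear_combination g i j * this

theorem glBraid_coeff_swap23 (hs_lt : ∀ ⦃i j⦄, i < j → s i j = ω)
    (hs_gt : ∀ ⦃i j⦄, j < i → s i j = 0) (hg_diag : ∀ i, g i i = 0) (i j k : ι) :
    s i j * (g j k * s i k) = s j k * (s i j * g j k) + g j k * (s i k * s k j) := by
  rcases eq_or_ne j k with rfl | hjk
  · rw [hg_diag]; ring
  have : s i j * s i k = s j k * s i j + s i k * s k j := by
    rcases hjk.lt_or_gt with hjk | hjk
    · rw [hs_lt hjk, hs_gt hjk]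
      rcases lt_trichotomy i j with hij | rfl | hij
      · rw [hs_lt hij, hs_lt (hij.trans hjk)]; ring
      · rw [hs_lt hjk]; ring
      · rw [hs_gt hij]; ring
    · rw [hs_gt hjk, hs_lt hjk]
      rcases lt_trichotomy i k with hik | rfl | hik
      · rw [hs_lt hik, hs_lt (hik.trans hjk)]; ring
      · rw [hs_lt hjk]; ring
      · rw [hs_gt hik]; ring
  linear_combination g j k * this

theorem glBraidMatrix_braid [Fintype ι] (hs_lt : ∀ ⦃i j⦄, i < j → s i j = ω)
    (hs_gt : ∀ ⦃i j⦄, j < i → s i j = 0) (hs_diag : ∀ i, s i i * s i i = ω * s i i + 1)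
    (hg_diag : ∀ i, g i i = 0) (hg : ∀ ⦃i j⦄, i ≠ j → g i j * g j i = 1) :
    onFactors12 (glBraidMatrix s g) * onFactors23 (glBraidMatrix s g) *
        onFactors12 (glBraidMatrix s g) =
      onFactors23 (glBraidMatrix s g) * onFactors12 (glBraidMatrix s g) *
        onFactors23 (glBraidMatrix s g) := by
  refine ext_of_single_vecMul fun ⟨i, j, k⟩ => ?_
  simp only [← vecMul_vecMul, single_vecMul_onFactors12_glBraidMatrix,
    single_vecMul_onFactors23_glBraidMatrix, add_vecMul, smul_vecMul]
  let e (x : ι × ι × ι) : ι × ι × ι → R := Pi.single x 1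
  linear_combination (norm := module)
    glBraid_coeff_id hs_lt hs_gt hs_diag hg_diag hg i j k • e (i, j, k)
    + glBraid_coeff_swap12 hs_lt hs_gt hg_diag i j k • e (j, i, k)
    + glBraid_coeff_swap23 hs_lt hs_gt hg_diag i j k • e (i, k, j)

end GLBraid

section braidS

variable {N : ℕ} {p : Fin N → ℕ} {q : ℂ}

noncomputable def gradedSwapSign (p : Fin N → ℕ) (i j : Fin N) : ℂ :=
  if i = j then 0 else (-1) ^ (p i * p j)

theorem gradedSwapSign_self (i : Fin N) : gradedSwapSign p i i = 0 := if_pos rfl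

theorem gradedSwapSign_mul_swap {i j : Fin N} (h : i ≠ j) :
    gradedSwapSign p i j * gradedSwapSign p j i = 1 := by
  rw [gradedSwapSign, gradedSwapSign, if_neg h, if_neg h.symm, ← pow_add, mul_comm (p j)]
  exact Even.neg_one_pow ⟨p i * p j, rfl⟩

theorem sEnt_of_lt {i j : Fin N} (h : i < j) : sEnt N p q i j = q - q⁻¹ := if_pos h

theorem sEnt_of_gt {i j : Fin N} (h : j < i) : sEnt N p q i j = 0 := by
  rw [sEnt, if_neg h.not_gt, if_neg h.ne']

theorem sEnt_mul_self (hq : q ≠ 0) (i : Fin N) :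
    sEnt N p q i i * sEnt N p q i i = (q - q⁻¹) * sEnt N p q i i + 1 := by
  rw [sEnt, if_neg (lt_irrefl i), if_pos rfl]
  rcases Nat.mod_two_eq_zero_or_one (p i) with h | h
  · rw [if_pos h, (Nat.even_iff.mpr h).neg_one_pow]
    field_simp
    ring
  · rw [h, if_neg one_ne_zero, (Nat.odd_iff.mpr h).neg_one_pow]
    field_simp
    ring

theorem braidS_eq_glBraidMatrix :
    braidS N p q = glBraidMatrix (sEnt N p q) (gradedSwapSign p) := by
  ext ⟨i, j⟩ ⟨a, b⟩
  simp only [braidS, glBraidMatrix, gradedSwapSign, of_apply, Prod.ext_iff, Prod.fst_swap,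
    Prod.snd_swap]
  grind

end braidS

theorem braidS_braid_relation_general (N : ℕ) (p : Fin N → ℕ) (q : ℂ) (hq : q ≠ 0) :
    S12 N p q * S23 N p q * S12 N p q = S23 N p q * S12 N p q * S23 N p q := by
  have h12 : S12 N p q = onFactors12 (braidS N p q) := rfl
  have h23 : S23 N p q = onFactors23 (braidS N p q) := rfl
  rw [h12, h23, braidS_eq_glBraidMatrix]
  exact glBraidMatrix_braid (fun _ _ ↦ sEnt_of_lt) (fun _ _ ↦ sEnt_of_gt) (sEnt_mul_self hq)
    gradedSwapSign_self (fun _ _ ↦ gradedSwapSign_mul_swap)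

/-- the GL-type graded braid matrix satisfies the braid relation
`Š₁₂ Š₂₃ Š₁₂ = Š₂₃ Š₁₂ Š₂₃`. -/
theorem braidS_braid_relation (N : ℕ) (hN : 1 ≤ N) (p : Fin N → ℕ)
    (hp : ∀ i, p i ≤ 1) (q : ℂ) (hq : q ≠ 0) (hq2 : q ^ 2 ≠ 1) :
    S12 N p q * S23 N p q * S12 N p q = S23 N p q * S12 N p q * S23 N p q :=
  braidS_braid_relation_general N p q hq
end

section
/- Let V be a finite-dimensional vector space over ℂ and let S ∈ End(V ⊗ V) be invertible, satisfying the braid relation S₁₂ S₂₃ S₁₂ = S₂₃ S₁₂ S₂₃ and the Hecke condition S² = ω S + 1 for some ω ∈ ℂ. Define S(x) = S − x⁻¹ S⁻¹ for x ∈ ℂˣ. Then S(·) satisfies the spectral-parameter Yang–Baxter equation S₂₃(x) S₁₂(xy) S₂₃(y) = S₁₂(y) S₂₃(xy) S₁₂(x) for all x, y ∈ ℂˣ. -/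
open TensorProduct

/-- Abstract baxterization: in any `ℂ`-algebra, two Hecke elements satisfying the
braid relation satisfy the spectral Yang–Baxter identity. -/
theorem bax_aux {A : Type*} [Ring A] [Algebra ℂ A] (a b : A) (ω u v : ℂ)
    (ha : a * a = ω • a + 1) (hb : b * b = ω • b + 1)
    (hbr : a * (b * a) = b * (a * b)) :
    (b - u • (b - ω • 1)) * ((a - (u * v) • (a - ω • 1)) * (b - v • (b - ω • 1))) =
      (a - v • (a - ω • 1)) * ((b - (u * v) • (b - ω • 1)) * (a - u • (a - ω • 1))) := by
  have e1 : b - u • (b - ω • 1) = (1 - u) • b + (u * ω) • (1 : A) := by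
    simp [smul_sub, smul_smul, sub_smul]; abel
  have e2 : a - (u * v) • (a - ω • 1) = (1 - u * v) • a + (u * v * ω) • (1 : A) := by
    simp [smul_sub, smul_smul, sub_smul]; abel
  have e3 : b - v • (b - ω • 1) = (1 - v) • b + (v * ω) • (1 : A) := by
    simp [smul_sub, smul_smul, sub_smul]; abel
  have e4 : a - v • (a - ω • 1) = (1 - v) • a + (v * ω) • (1 : A) := by
    simp [smul_sub, smul_smul, sub_smul]; abel
  have e5 : b - (u * v) • (b - ω • 1) = (1 - u * v) • b + (u * v * ω) • (1 : A) := by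
    simp [smul_sub, smul_smul, sub_smul]; abel
  have e6 : a - u • (a - ω • 1) = (1 - u) • a + (u * ω) • (1 : A) := by
    simp [smul_sub, smul_smul, sub_smul]; abel
  rw [e1, e2, e3, e4, e5, e6]
  simp only [mul_add, add_mul, smul_mul_assoc, mul_smul_comm, smul_smul, one_mul, mul_one]
  rw [ha, hb, hbr]
  simp only [smul_add, smul_smul]
  match_scalars <;> ring

/-- baxterization of a Hecke braid operator. If `S` on `V ⊗ V` is
invertible, satisfies the braid relation on `V ⊗ V ⊗ V` and the Hecke condition
`S² = ωS + 1`, then `S(x) := S − x⁻¹ S⁻¹` satisfies the spectral Yang–Baxter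
equation `S₂₃(x) S₁₂(xy) S₂₃(y) = S₁₂(y) S₂₃(xy) S₁₂(x)`. -/
theorem baxterization_spectral_YBE
    (V : Type) [AddCommGroup V] [Module ℂ V] [FiniteDimensional ℂ V]
    (S Sinv : Module.End ℂ (V ⊗[ℂ] V))
    (hinv₁ : S * Sinv = 1) (hinv₂ : Sinv * S = 1)
    (ω : ℂ) (hHecke : S * S = ω • S + 1)
    -- the legs of `S` and `S⁻¹` on `V ⊗ (V ⊗ V)`
    (S₁₂ S₂₃ S₁₂' S₂₃' : Module.End ℂ (V ⊗[ℂ] (V ⊗[ℂ] V)))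
    (hS12 : S₁₂ = (TensorProduct.assoc ℂ V V V).toLinearMap ∘ₗ
      (LinearMap.rTensor V S) ∘ₗ (TensorProduct.assoc ℂ V V V).symm.toLinearMap)
    (hS12' : S₁₂' = (TensorProduct.assoc ℂ V V V).toLinearMap ∘ₗ
      (LinearMap.rTensor V Sinv) ∘ₗ (TensorProduct.assoc ℂ V V V).symm.toLinearMap)
    (hS23 : S₂₃ = LinearMap.lTensor V S)
    (hS23' : S₂₃' = LinearMap.lTensor V Sinv)
    (hbraid : S₁₂ * S₂₃ * S₁₂ = S₂₃ * S₁₂ * S₂₃)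
    (x y : ℂ) (hx : x ≠ 0) (hy : y ≠ 0) :
    (S₂₃ - x⁻¹ • S₂₃') * (S₁₂ - (x * y)⁻¹ • S₁₂') * (S₂₃ - y⁻¹ • S₂₃') =
      (S₁₂ - y⁻¹ • S₁₂') * (S₂₃ - (x * y)⁻¹ • S₂₃') * (S₁₂ - x⁻¹ • S₁₂') := by
  -- `Sinv = S - ω • 1`
  have hS1 : S * (S - ω • 1) = 1 := by
    rw [mul_sub, hHecke, mul_smul_comm, mul_one]; abel
  have hSinv : Sinv = S - ω • 1 := by
    calc Sinv = Sinv * (S * (S - ω • 1)) := by rw [hS1, mul_one]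
    _ = (Sinv * S) * (S - ω • 1) := by rw [mul_assoc]
    _ = S - ω • 1 := by rw [hinv₂, one_mul]
  -- leg identities
  have h23 : S₂₃ * S₂₃ = ω • S₂₃ + 1 := by
    rw [hS23, ← LinearMap.lTensor_mul, hHecke]
    rw [LinearMap.lTensor_add, LinearMap.lTensor_smul]
    congr 1
    exact LinearMap.lTensor_id V _
  have h23' : S₂₃' = S₂₃ - ω • 1 := by
    rw [hS23', hSinv, hS23, LinearMap.lTensor_sub, LinearMap.lTensor_smul]
    congr 1
    congr 1
    exact LinearMap.lTensor_id V _
  have key12 : ∀ T : Module.End ℂ (V ⊗[ℂ] V),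
      ((TensorProduct.assoc ℂ V V V).toLinearMap ∘ₗ
        (LinearMap.rTensor V T) ∘ₗ (TensorProduct.assoc ℂ V V V).symm.toLinearMap) ∘ₗ
      ((TensorProduct.assoc ℂ V V V).toLinearMap ∘ₗ
        (LinearMap.rTensor V T) ∘ₗ (TensorProduct.assoc ℂ V V V).symm.toLinearMap) =
      (TensorProduct.assoc ℂ V V V).toLinearMap ∘ₗ
        (LinearMap.rTensor V (T * T)) ∘ₗ (TensorProduct.assoc ℂ V V V).symm.toLinearMap := by
    intro T
    ext w
    simp [LinearMap.rTensor_mul, Module.End.mul_apply]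
  have h12 : S₁₂ * S₁₂ = ω • S₁₂ + 1 := by
    have : S₁₂ * S₁₂ = (TensorProduct.assoc ℂ V V V).toLinearMap ∘ₗ
        (LinearMap.rTensor V (S * S)) ∘ₗ (TensorProduct.assoc ℂ V V V).symm.toLinearMap := by
      rw [hS12]; exact key12 S
    rw [this, hHecke, LinearMap.rTensor_add, LinearMap.rTensor_smul]
    ext w
    simp [hS12]
  have h12' : S₁₂' = S₁₂ - ω • 1 := by
    rw [hS12', hSinv, hS12, LinearMap.rTensor_sub, LinearMap.rTensor_smul]
    ext w
    simp
  -- reduce to the abstract lemma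
  have hxy : (x * y)⁻¹ = x⁻¹ * y⁻¹ := by
    rw [mul_inv]
  have hbr : S₁₂ * (S₂₃ * S₁₂) = S₂₃ * (S₁₂ * S₂₃) := by
    rw [← mul_assoc, hbraid, mul_assoc]
  rw [h12', h23', hxy, mul_assoc, mul_assoc]
  exact bax_aux S₁₂ S₂₃ ω x⁻¹ y⁻¹ h12 h23 hbr
end

section
/- Let A be an N×N complex matrix whose off-diagonal nonzero entries are encoded by a subset Y ⊆ {1,…,N} and an injective fixed-point-free map σ : Y → {1,…,N} via A^{σ(i)}_i = y_i ≠ 0 for i ∈ Y and A^j_i = 0 for all other j ≠ i. If additionally A satisfies A^n_i A^j_m = 0 whenever j ≠ m, m ≠ n, n ≠ i and (m − i)(n − j) < 0, then σ is strictly decreasing on Y. -/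
open Matrix

/-- if the off-diagonal support of `A` is encoded by `(Y, σ)` with
nonzero values `y_i = A^{σ(i)}_i`, and `A^n_i A^j_m = 0` whenever
`j ≠ m`, `m ≠ n`, `n ≠ i` and `(m − i)(n − j) < 0`, then `σ` is strictly
decreasing on `Y`. -/
theorem sigma_strictly_decreasing
    (N : ℕ) (A : Matrix (Fin N) (Fin N) ℂ)
    (Y : Finset (Fin N)) (σ : Fin N → Fin N) (y : Fin N → ℂ)
    (hinj : ∀ i ∈ Y, ∀ j ∈ Y, σ i = σ j → i = j)
    (hfix : ∀ i ∈ Y, σ i ≠ i)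
    (hval : ∀ i ∈ Y, A (σ i) i = y i ∧ y i ≠ 0)
    (hsupp : ∀ i j : Fin N, j ≠ i → (i ∉ Y ∨ j ≠ σ i) → A j i = 0)
    (hquad : ∀ i j m n : Fin N, j ≠ m → m ≠ n → n ≠ i →
      ((m : ℤ) - (i : ℤ)) * ((n : ℤ) - (j : ℤ)) < 0 → A n i * A j m = 0) :
    ∀ i ∈ Y, ∀ j ∈ Y, i < j → σ j < σ i := by
  intro i hi j hj hij
  by_contra h
  push_neg at h
  have hne : σ i ≠ σ j := fun hEq => absurd (hinj i hi j hj hEq) (ne_of_lt hij)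
  have hlt : σ i < σ j := lt_of_le_of_ne h hne
  obtain ⟨hAi, hyi⟩ := hval i hi
  obtain ⟨hAj, hyj⟩ := hval j hj
  have hzi : A (σ i) i ≠ 0 := by rw [hAi]; exact hyi
  have hzj : A (σ j) j ≠ 0 := by rw [hAj]; exact hyj
  by_cases hc : j = σ i
  · -- use hquad with i := j, j := σ i, m := i, n := σ j
    have hin : i ≠ σ j := by
      intro hEq
      have : σ j < σ i := by rw [← hEq, ← hc]; exact hij
      exact absurd hlt (not_lt.mpr this.le)
    have := hquad j (σ i) i (σ j) (hfix i hi)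
      hin (hfix j hj)
      (by
        have h1 : (i : ℤ) < (j : ℤ) := by exact_mod_cast hij
        have h2 : ((σ i : Fin N) : ℤ) < ((σ j : Fin N) : ℤ) := by exact_mod_cast hlt
        nlinarith)
    exact (mul_ne_zero hzj hzi) this
  · -- use hquad with i := i, j := σ j, m := j, n := σ i
    have := hquad i (σ j) j (σ i) (hfix j hj)
      hc (hfix i hi)
      (by
        have h1 : (i : ℤ) < (j : ℤ) := by exact_mod_cast hij
        have h2 : ((σ i : Fin N) : ℤ) < ((σ j : Fin N) : ℤ) := by exact_mod_cast hlt
        nlinarith)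
    exact (mul_ne_zero hzi hzj) this
end

section
/- Let λ, μ ∈ ℂ, let b₋ < b₊ be positive integers with b₋ + b₊ ≤ N + 1, and let A ∈ Mat_N(ℂ) be the Type-1 matrix: A^i_i = λ + μ for 1 ≤ i ≤ b₋, A^i_i = λ for b₋ < i < b₊, A^i_i = 0 for b₊ ≤ i ≤ N; A^{σ(j)}_j = y_j for j ∈ Y = [1,b₋] ∪ [b₊, b₊+b₋−1] where σ(j) = b₊ + b₋ − j and y_j y_{σ(j)} = −λμ ≠ 0; all other entries zero. Then A satisfies the cubic equation A(A − λ)(A − μ) = 0. -/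
open Matrix

/-- Membership of a 1-based label `k` in `Y = [1,b₋] ∪ [b₊, b₊+b₋−1]`. -/
def inY1 (bm bp k : ℕ) : Prop := (1 ≤ k ∧ k ≤ bm) ∨ (bp ≤ k ∧ k ≤ bp + bm - 1)

instance (bm bp k : ℕ) : Decidable (inY1 bm bp k) := by unfold inY1; infer_instance

/-- The Type-1 matrix (1-based labels `i+1`, `j+1` for `i j : Fin N`):
diagonal `λ+μ` on `[1,b₋]`, `λ` on `(b₋,b₊)`, `0` on `[b₊,N]`; off-diagonal
entries `y_j` at positions `(σ(j), j)` with `σ(j) = b₊+b₋−j` for `j ∈ Y`. -/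
noncomputable def typeOne (N bm bp : ℕ) (lam mu : ℂ) (y : ℕ → ℂ) :
    Matrix (Fin N) (Fin N) ℂ :=
  fun i j =>
    if i = j then
      (if (j : ℕ) + 1 ≤ bm then lam + mu
       else if (j : ℕ) + 1 < bp then lam else 0)
    else if ((i : ℕ) + 1) + ((j : ℕ) + 1) = bp + bm ∧ inY1 bm bp ((j : ℕ) + 1)
      then y ((j : ℕ) + 1) else 0

/-!
Index the rows of `A` from `1`. A row `i ∉ Y` is a multiple of the unit row `eᵢ`: it is `λ eᵢ`
for `b₋ < i < b₊`, killed by the factor `A - λ`, and `0` for `i ≥ b₊ + b₋`, killed by the factor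
`A`. For `i ∈ Y` the rows `i` and `σ(i)` span a plane that right multiplication by `A` preserves,
acting there by `[[λ+μ, y_{σ(i)}], [y_i, 0]]` up to order; its trace is `λ + μ` and its
determinant `-y_i y_{σ(i)} = λμ`, so by Cayley–Hamilton `(A - λ)(A - μ)` already kills both rows.
-/

namespace Matrix

variable {n R : Type*} [DecidableEq n] [CommRing R]

theorem sub_smul_one_row (A : Matrix n n R) (k : n) (r : R) :
    (A - r • 1) k = A k - Pi.single k r := by
  ext j
  simp [one_apply, Pi.single_apply, eq_comm]

theorem row_sub_smul_one_mul_sub_smul_one_eq_zero [Fintype n] (A : Matrix n n R) {i s : n}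
    {a b c d lam mu : R}
    (hi : A i = Pi.single i a + Pi.single s b) (hs : A s = Pi.single s c + Pi.single i d)
    (htr : a + c = lam + mu) (hdet : a * c - b * d = lam * mu) :
    ((A - lam • 1) * (A - mu • 1)) i = 0 := by
  ext j
  simp only [mul_apply_eq_vecMul, sub_smul_one_row, hi, hs, sub_vecMul, add_vecMul,
    single_vecMul, row, Pi.sub_apply, Pi.add_apply, Pi.smul_apply, Pi.single_apply,
    smul_eq_mul, Pi.zero_apply]
  split_ifs
  · linear_combination (a + b) * htr - hdet
  · linear_combination a * htr - hdet
  · linear_combination b * htr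
  · ring

end Matrix

theorem inY1_of_add_eq {bm bp k l : ℕ} (hk : inY1 bm bp k) (hkl : k + l = bp + bm) :
    inY1 bm bp l := by
  unfold inY1 at hk ⊢
  omega

section typeOne

variable {N bm bp : ℕ} {lam mu : ℂ} {y : ℕ → ℂ}

theorem typeOne_apply_self (i : Fin N) :
    typeOne N bm bp lam mu y i i =
      if (i : ℕ) + 1 ≤ bm then lam + mu else if (i : ℕ) + 1 < bp then lam else 0 := by
  simp [typeOne]

theorem typeOne_row_of_not_inY1 {i : Fin N} (hi : ¬ inY1 bm bp ((i : ℕ) + 1)) :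
    typeOne N bm bp lam mu y i = Pi.single i (typeOne N bm bp lam mu y i i) := by
  ext j
  by_cases hji : j = i
  · subst hji
    simp
  · simp only [Pi.single_eq_of_ne hji, typeOne, if_neg (Ne.symm hji), ite_eq_right_iff, and_imp]
    exact fun hsum hj => absurd (inY1_of_add_eq hj (by omega)) hi

theorem typeOne_row_of_inY1 (hb : bm < bp) {i s : Fin N} (hi : inY1 bm bp ((i : ℕ) + 1))
    (hs : ((i : ℕ) + 1) + ((s : ℕ) + 1) = bp + bm) :
    typeOne N bm bp lam mu y i =
      Pi.single i (typeOne N bm bp lam mu y i i) + Pi.single s (y ((s : ℕ) + 1)) := by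
  have his : i ≠ s := by
    rintro rfl
    unfold inY1 at hi
    omega
  ext j
  by_cases hji : j = i
  · subst hji
    simp [Pi.single_eq_of_ne his]
  by_cases hjs : j = s
  · subst hjs
    simp [typeOne, Ne.symm hji, hs, inY1_of_add_eq hi hs]
  · simp only [Pi.add_apply, Pi.single_eq_of_ne hji, Pi.single_eq_of_ne hjs, add_zero, typeOne,
      if_neg (Ne.symm hji), ite_eq_right_iff, and_imp]
    exact fun hsum _ => absurd (Fin.ext (by omega)) hjs

theorem typeOne_mul_sub_smul_one_row_eq_zero {i : Fin N} (hi : ¬ inY1 bm bp ((i : ℕ) + 1))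
    (hlt : (i : ℕ) + 1 < bp) :
    (typeOne N bm bp lam mu y * (typeOne N bm bp lam mu y - lam • 1)) i = 0 := by
  have hrow : typeOne N bm bp lam mu y i = Pi.single i lam := by
    rw [typeOne_row_of_not_inY1 hi, typeOne_apply_self, if_neg (by unfold inY1 at hi; omega),
      if_pos hlt]
  rw [mul_apply_eq_vecMul, hrow, single_vecMul, row_apply', sub_smul_one_row, hrow, sub_self,
    smul_zero]

theorem typeOne_row_eq_zero {i : Fin N} (hi : ¬ inY1 bm bp ((i : ℕ) + 1))
    (hge : bp ≤ (i : ℕ) + 1) : typeOne N bm bp lam mu y i = 0 := by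
  rw [typeOne_row_of_not_inY1 hi, typeOne_apply_self, if_neg (by unfold inY1 at hi; omega),
    if_neg (by omega), Pi.single_zero]

theorem typeOne_sub_smul_one_mul_sub_smul_one_row_eq_zero (hb : bm < bp)
    (hy : ∀ k, inY1 bm bp k → y k * y (bp + bm - k) = -(lam * mu))
    {i s : Fin N} (hi : inY1 bm bp ((i : ℕ) + 1)) (hs : ((i : ℕ) + 1) + ((s : ℕ) + 1) = bp + bm) :
    ((typeOne N bm bp lam mu y - lam • 1) * (typeOne N bm bp lam mu y - mu • 1)) i = 0 := by
  have hsY : inY1 bm bp ((s : ℕ) + 1) := inY1_of_add_eq hi hs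
  have hyy : y ((s : ℕ) + 1) * y ((i : ℕ) + 1) = -(lam * mu) := by
    simpa [show bp + bm - ((s : ℕ) + 1) = (i : ℕ) + 1 by omega] using hy _ hsY
  have hdiag : typeOne N bm bp lam mu y i i * typeOne N bm bp lam mu y s s = 0 ∧
      typeOne N bm bp lam mu y i i + typeOne N bm bp lam mu y s s = lam + mu := by
    simp only [typeOne_apply_self]
    unfold inY1 at hi
    rcases hi with h | h
    · simp [show (s : ℕ) + 1 ≥ bp by omega, show ¬ (s : ℕ) + 1 ≤ bm by omega, h.2]
    · simp [show ¬ (i : ℕ) + 1 ≤ bm by omega, show ¬ (i : ℕ) + 1 < bp by omega,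
        show (s : ℕ) + 1 ≤ bm by omega]
  exact row_sub_smul_one_mul_sub_smul_one_eq_zero _ (typeOne_row_of_inY1 hb hi hs)
    (typeOne_row_of_inY1 hb hsY (by omega)) hdiag.2 (by linear_combination hdiag.1 - hyy)

end typeOne

theorem typeOne_cubic_general (N bm bp : ℕ)
    (hb : bm < bp) (hbN : bm + bp ≤ N + 1)
    (lam mu : ℂ) (y : ℕ → ℂ)
    (hy : ∀ k, inY1 bm bp k → y k * y (bp + bm - k) = -(lam * mu)) :
    typeOne N bm bp lam mu y *
      (typeOne N bm bp lam mu y - lam • (1 : Matrix (Fin N) (Fin N) ℂ)) *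
      (typeOne N bm bp lam mu y - mu • (1 : Matrix (Fin N) (Fin N) ℂ)) = 0 := by
  funext i
  show _ = 0
  by_cases hi : inY1 bm bp ((i : ℕ) + 1)
  · obtain ⟨s, hs⟩ : ∃ s : Fin N, ((i : ℕ) + 1) + ((s : ℕ) + 1) = bp + bm := by
      unfold inY1 at hi
      exact ⟨⟨bp + bm - ((i : ℕ) + 1) - 1, by omega⟩, by simp only; omega⟩
    have hPi := typeOne_sub_smul_one_mul_sub_smul_one_row_eq_zero hb hy hi hs
    have hPs := typeOne_sub_smul_one_mul_sub_smul_one_row_eq_zero hb hy (inY1_of_add_eq hi hs)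
      (by omega : ((s : ℕ) + 1) + ((i : ℕ) + 1) = bp + bm)
    rw [mul_assoc, mul_apply_eq_vecMul, typeOne_row_of_inY1 hb hi hs, add_vecMul, single_vecMul,
      single_vecMul, row_apply', row_apply', hPi, hPs, smul_zero, smul_zero, add_zero]
  · rcases lt_or_ge ((i : ℕ) + 1) bp with hlt | hge
    · rw [mul_apply_eq_vecMul, typeOne_mul_sub_smul_one_row_eq_zero hi hlt, zero_vecMul]
    · rw [mul_assoc, mul_apply_eq_vecMul, typeOne_row_eq_zero hi hge, zero_vecMul]

/-- a Type-1 matrix satisfies the cubic `A(A − λ)(A − μ) = 0`. -/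
theorem typeOne_cubic (N bm bp : ℕ) (hN : 1 ≤ N)
    (hbm : 1 ≤ bm) (hb : bm < bp) (hbN : bm + bp ≤ N + 1)
    (lam mu : ℂ) (hlm : lam * mu ≠ 0) (y : ℕ → ℂ)
    (hy : ∀ k, inY1 bm bp k → y k * y (bp + bm - k) = -(lam * mu))
    (hynz : ∀ k, inY1 bm bp k → y k ≠ 0) :
    typeOne N bm bp lam mu y *
      (typeOne N bm bp lam mu y - lam • (1 : Matrix (Fin N) (Fin N) ℂ)) *
      (typeOne N bm bp lam mu y - mu • (1 : Matrix (Fin N) (Fin N) ℂ)) = 0 :=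
  typeOne_cubic_general N bm bp hb hbN lam mu y hy
end

section
/- Let S ∈ End(V ⊗ V) be invertible satisfying the braid relation and the Hecke condition S² = ωS + 1, and let A ∈ End(V) satisfy the constant reflection equation S A₂ S A₂ = A₂ S A₂ S, and suppose A satisfies the quadratic relation (A − λ)(A − μ) = 0 for some λ, μ ∈ ℂ. Define S(x) = S − x⁻¹ S⁻¹ and A(x) = A − x⁻¹(ξx − λ − μ)/(x − x⁻¹) · id for x ∈ ℂˣ with x² ≠ 1, where ξ ∈ ℂ is arbitrary. Then the spectral reflection equation S(x/y) A₂(x) S(xy) A₂(y) = A₂(y) S(xy) A₂(x) S(x/y) holds for all admissible x, y. -/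
open TensorProduct

/-- Auxiliary baxterization identity in an arbitrary complex algebra. -/
lemma bax_key_aux {R : Type*} [Ring R] [Algebra ℂ R] (S B : R)
    (ω σ p α α' β γ γ' δ c d : ℂ)
    (hH : S * S = ω • S + 1)
    (hB : B * B = σ • B - p • 1)
    (hRE : S * B * S * B = B * S * B * S)
    (hK : α * γ * c * δ * ω + α' * γ * (δ * c - β * d)
        = α * γ' * (β * δ * σ - β * d - δ * c)) :
    (α • S + α' • 1) * (β • B - c • 1) * (γ • S + γ' • 1) * (δ • B - d • 1)
      = (δ • B - d • 1) * (γ • S + γ' • 1) * (β • B - c • 1) * (α • S + α' • 1) := by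
  have T4 : (β • B - c • 1) * (δ • B - d • 1) = (δ • B - d • 1) * (β • B - c • 1) := by
    simp only [sub_mul, mul_sub, mul_smul_comm, smul_mul_assoc, smul_smul, mul_one, one_mul,
      mul_comm c d, mul_comm β δ, mul_comm c δ, mul_comm β d]
    module
  have T3 : (β • B - c • 1) * S * (δ • B - d • 1) - (δ • B - d • 1) * S * (β • B - c • 1)
      = (δ * c - β * d) • (B * S - S * B) := by
    simp only [sub_mul, mul_sub, mul_smul_comm, smul_mul_assoc, smul_smul, mul_one, one_mul]
    module
  have T2 : S * ((β • B - c • 1) * (δ • B - d • 1)) - ((δ • B - d • 1) * (β • B - c • 1)) * S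
      = (β * δ * σ - β * d - δ * c) • (S * B - B * S) := by
    have h1 : (β • B - c • 1) * (δ • B - d • 1)
        = (β * δ * σ - β * d - δ * c) • B + (c * d - β * δ * p) • 1 := by
      simp only [sub_mul, mul_sub, mul_smul_comm, smul_mul_assoc, smul_smul, mul_one, one_mul, hB]
      module
    rw [T4] at h1 ⊢
    rw [h1]
    simp only [mul_add, add_mul, mul_smul_comm, smul_mul_assoc, mul_one, one_mul]
    module
  have T1 : S * (β • B - c • 1) * S * (δ • B - d • 1)
        - (δ • B - d • 1) * S * (β • B - c • 1) * S
      = (-(c * δ * ω)) • (S * B - B * S) := by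
    have hSS : S * S * B - B * (S * S) = ω • (S * B - B * S) := by
      rw [hH]; simp only [add_mul, mul_add, smul_mul_assoc, mul_smul_comm, one_mul, mul_one]
      module
    calc S * (β • B - c • 1) * S * (δ • B - d • 1)
          - (δ • B - d • 1) * S * (β • B - c • 1) * S
        = (β * δ) • (S * B * S * B - B * S * B * S)
            - (c * δ) • (S * S * B - B * (S * S)) := by
          simp only [sub_mul, mul_sub, mul_smul_comm, smul_mul_assoc, smul_smul, mul_one, one_mul,
            mul_assoc]
          module
      _ = (-(c * δ * ω)) • (S * B - B * S) := by
          rw [hRE, sub_self, smul_zero, hSS, zero_sub, smul_smul]; module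
  rw [← sub_eq_zero]
  have expand : (α • S + α' • 1) * (β • B - c • 1) * (γ • S + γ' • 1) * (δ • B - d • 1)
      - (δ • B - d • 1) * (γ • S + γ' • 1) * (β • B - c • 1) * (α • S + α' • 1)
      = (α * γ) • (S * (β • B - c • 1) * S * (δ • B - d • 1)
            - (δ • B - d • 1) * S * (β • B - c • 1) * S)
        + (α * γ') • (S * ((β • B - c • 1) * (δ • B - d • 1))
            - ((δ • B - d • 1) * (β • B - c • 1)) * S)
        + (α' * γ) • ((β • B - c • 1) * S * (δ • B - d • 1)
            - (δ • B - d • 1) * S * (β • B - c • 1))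
        + (α' * γ') • ((β • B - c • 1) * (δ • B - d • 1)
            - (δ • B - d • 1) * (β • B - c • 1)) := by
    generalize (β • B - c • 1) = X
    generalize (δ • B - d • 1) = Y
    simp only [add_mul, mul_add, smul_mul_assoc, mul_smul_comm, one_mul, mul_one, smul_smul,
      smul_sub, mul_assoc]
    module
  rw [expand, T1, T2, T3, T4, sub_self, smul_zero, add_zero]
  match_scalars <;> (first | linear_combination hK | linear_combination (-1 : ℂ) * hK)

/-- baxterization of a constant reflection matrix with quadratic
minimal polynomial. With `S(z) = S − z⁻¹S⁻¹` and
`A(x) = A − x⁻¹(ξx − λ − μ)/(x − x⁻¹) · id`, the spectral reflection equation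
`S(x/y) A₂(x) S(xy) A₂(y) = A₂(y) S(xy) A₂(x) S(x/y)` holds. -/
theorem baxterization_spectral_RE
    (V : Type) [AddCommGroup V] [Module ℂ V] [FiniteDimensional ℂ V]
    (S Sinv : Module.End ℂ (V ⊗[ℂ] V))
    (hinv₁ : S * Sinv = 1) (hinv₂ : Sinv * S = 1)
    (ω : ℂ) (hHecke : S * S = ω • S + 1)
    (S₁₂ S₂₃ : Module.End ℂ (V ⊗[ℂ] (V ⊗[ℂ] V)))
    (hS12 : S₁₂ = (TensorProduct.assoc ℂ V V V).toLinearMap ∘ₗ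
      (LinearMap.rTensor V S) ∘ₗ (TensorProduct.assoc ℂ V V V).symm.toLinearMap)
    (hS23 : S₂₃ = LinearMap.lTensor V S)
    (hbraid : S₁₂ * S₂₃ * S₁₂ = S₂₃ * S₁₂ * S₂₃)
    (A : Module.End ℂ V) (A₂ : Module.End ℂ (V ⊗[ℂ] V))
    (hA2 : A₂ = LinearMap.lTensor V A)
    (hRE : S * A₂ * S * A₂ = A₂ * S * A₂ * S)
    (lam mu : ℂ)
    (hquad : (A - lam • 1) * (A - mu • 1) = 0)
    (ξ : ℂ) (x y : ℂ) (hx : x ≠ 0) (hy : y ≠ 0)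
    (hx2 : x ^ 2 ≠ 1) (hy2 : y ^ 2 ≠ 1) :
    (S - (x / y)⁻¹ • Sinv) *
      (A₂ - (x⁻¹ * (ξ * x - lam - mu) / (x - x⁻¹)) • 1) *
      (S - (x * y)⁻¹ • Sinv) *
      (A₂ - (y⁻¹ * (ξ * y - lam - mu) / (y - y⁻¹)) • 1) =
    (A₂ - (y⁻¹ * (ξ * y - lam - mu) / (y - y⁻¹)) • 1) *
      (S - (x * y)⁻¹ • Sinv) *
      (A₂ - (x⁻¹ * (ξ * x - lam - mu) / (x - x⁻¹)) • 1) *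
      (S - (x / y)⁻¹ • Sinv) := by
  have hx21 : x ^ 2 - 1 ≠ 0 := sub_ne_zero.mpr hx2
  have hy21 : y ^ 2 - 1 ≠ 0 := sub_ne_zero.mpr hy2
  have hxx : x - x⁻¹ ≠ 0 := by
    intro h
    apply hx2
    have := sub_eq_zero.mp h
    field_simp at this
    linear_combination this
  have hyy : y - y⁻¹ ≠ 0 := by
    intro h
    apply hy2
    have := sub_eq_zero.mp h
    field_simp at this
    linear_combination this
  -- `Sinv = S - ω•1` from the Hecke relation
  have hSinv : Sinv = S - ω • 1 := by
    have h1 : S * (S - ω • 1) = 1 := by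
      rw [mul_sub, hHecke, mul_smul_comm, mul_one]; abel
    calc Sinv = Sinv * (S * (S - ω • 1)) := by rw [h1, mul_one]
      _ = (Sinv * S) * (S - ω • 1) := by rw [mul_assoc]
      _ = S - ω • 1 := by rw [hinv₂, one_mul]
  -- quadratic relation for `A`
  have hAq : A * A = (lam + mu) • A - (lam * mu) • 1 := by
    rw [← sub_eq_zero, ← hquad]
    simp only [sub_mul, mul_sub, mul_smul_comm, smul_mul_assoc, smul_smul, mul_one, one_mul,
      add_smul]
    module
  -- quadratic relation for `A₂`
  have hB : A₂ * A₂ = (lam + mu) • A₂ - (lam * mu) • 1 := by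
    have h : A₂ * A₂ = LinearMap.lTensor V (A * A) := by
      rw [hA2]; exact (LinearMap.lTensor_comp V A A).symm
    rw [h, hAq, hA2, LinearMap.lTensor_sub, LinearMap.lTensor_smul, LinearMap.lTensor_smul]
    congr 2
    exact LinearMap.lTensor_id V V
  -- clean up the scalar fractions
  have hcx : x⁻¹ * (ξ * x - lam - mu) / (x - x⁻¹) = (ξ * x - lam - mu) / (x ^ 2 - 1) := by
    rw [div_eq_div_iff hxx hx21]
    linear_combination (ξ * x - lam - mu) * x * (inv_mul_cancel₀ hx)
  have hcy : y⁻¹ * (ξ * y - lam - mu) / (y - y⁻¹) = (ξ * y - lam - mu) / (y ^ 2 - 1) := by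
    rw [div_eq_div_iff hyy hy21]
    linear_combination (ξ * y - lam - mu) * y * (inv_mul_cancel₀ hy)
  rw [hcx, hcy, hSinv]
  -- rescale the four factors to have polynomial coefficients
  have h1 : S - (x / y)⁻¹ • (S - ω • 1) = x⁻¹ • ((x - y) • S + (y * ω) • 1) := by
    rw [inv_div]
    match_scalars <;> field_simp <;> ring
  have h2 : S - (x * y)⁻¹ • (S - ω • 1) = (x * y)⁻¹ • ((x * y - 1) • S + ω • 1) := by
    match_scalars <;> field_simp
  have h3 : A₂ - ((ξ * x - lam - mu) / (x ^ 2 - 1)) • 1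
      = (x ^ 2 - 1)⁻¹ • ((x ^ 2 - 1) • A₂ - (ξ * x - lam - mu) • 1) := by
    match_scalars <;> field_simp
  have h4 : A₂ - ((ξ * y - lam - mu) / (y ^ 2 - 1)) • 1
      = (y ^ 2 - 1)⁻¹ • ((y ^ 2 - 1) • A₂ - (ξ * y - lam - mu) • 1) := by
    match_scalars <;> field_simp
  rw [h1, h2, h3, h4]
  have key := bax_key_aux S A₂ ω (lam + mu) (lam * mu) (x - y) (y * ω) (x ^ 2 - 1)
    (x * y - 1) ω (y ^ 2 - 1) (ξ * x - lam - mu) (ξ * y - lam - mu)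
    hHecke hB hRE (by ring)
  simp only [smul_mul_assoc, mul_smul_comm, smul_smul]
  rw [key]
  match_scalars
  ring
end

section
/- Let q ∈ ℂˣ with q⁴ ≠ 1 and fix a parity function [·] : {1,…,N} → {0,1}. The graded R-matrix R = Σ_{i,j} q^{(-1)^{[i]} δ_{ij}} e_{ii} ⊗ e_{jj} + ω Σ_{i>j} (-1)^{[j]} e_{ij} ⊗ e_{ji} (product in the graded tensor product End(V) ⊗ End(V), with sign rule (a⊗b)(c⊗d) = (-1)^{deg c · deg b} ac ⊗ bd) satisfies the graded Yang–Baxter equation R₁₂R₁₃R₂₃ = R₂₃R₁₃R₁₂. Equivalently, the associated non-graded matrix ŘR with entries Ř^{ij}_{kl} = (-1)^{[i][j]+[j][k]+[k][l]} R_{ik,jl} satisfies the ordinary Yang–Baxter equation on (ℂ^N)^{⊗3}. -/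
open Matrix

/-- The non-graded matrix `Ř` equivalent to the GL-type graded R-matrix:
`Ř^{ij}_{ij} = (-1)^{[i][j]} q^{(-1)^{[i]} δ_{ij}}` and `Ř^{ij}_{ji} = ω` for
`i < j`. -/
noncomputable def Rmat (N : ℕ) (p : Fin N → ℕ) (q : ℂ) :
    Matrix (Fin N × Fin N) (Fin N × Fin N) ℂ :=
  fun r c =>
    (if r = c then ((-1 : ℂ)) ^ (p r.1 * p r.2) *
      (if r.1 = r.2 then (if p r.1 % 2 = 0 then q else q⁻¹) else 1) else 0) +
    (if r.1 = c.2 ∧ r.2 = c.1 ∧ r.1 < r.2 then q - q⁻¹ else 0)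

noncomputable def R12 (N : ℕ) (p : Fin N → ℕ) (q : ℂ) :
    Matrix (Fin N × Fin N × Fin N) (Fin N × Fin N × Fin N) ℂ :=
  fun r c => Rmat N p q (r.1, r.2.1) (c.1, c.2.1) * (if r.2.2 = c.2.2 then 1 else 0)

noncomputable def R13 (N : ℕ) (p : Fin N → ℕ) (q : ℂ) :
    Matrix (Fin N × Fin N × Fin N) (Fin N × Fin N × Fin N) ℂ :=
  fun r c => Rmat N p q (r.1, r.2.2) (c.1, c.2.2) * (if r.2.1 = c.2.1 then 1 else 0)

noncomputable def R23 (N : ℕ) (p : Fin N → ℕ) (q : ℂ) :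
    Matrix (Fin N × Fin N × Fin N) (Fin N × Fin N × Fin N) ℂ :=
  fun r c => (if r.1 = c.1 then 1 else 0) * Rmat N p q r.2 c.2


noncomputable def kdC {α : Type*} [DecidableEq α] (a b : α) : ℂ := if a = b then 1 else 0

noncomputable def ddC (N : ℕ) (p : Fin N → ℕ) (q : ℂ) (a b : Fin N) : ℂ :=
  ((-1 : ℂ)) ^ (p a * p b) * (if a = b then (if p a % 2 = 0 then q else q⁻¹) else 1)

lemma Rmat_eq (N : ℕ) (p : Fin N → ℕ) (q : ℂ) (r c : Fin N × Fin N) :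
    Rmat N p q r c = ddC N p q r.1 r.2 * kdC c r +
      (if r.1 < r.2 then q - q⁻¹ else 0) * kdC c (r.2, r.1) := by
  obtain ⟨r1, r2⟩ := r; obtain ⟨c1, c2⟩ := c
  simp only [Rmat, ddC, kdC, Prod.mk.injEq]
  split_ifs <;> first | rfl | (exfalso; omega) | ring

lemma R12_eq (N : ℕ) (p : Fin N → ℕ) (q : ℂ) (r c : Fin N × Fin N × Fin N) :
    R12 N p q r c = ddC N p q r.1 r.2.1 * kdC c r +
      (if r.1 < r.2.1 then q - q⁻¹ else 0) * kdC c (r.2.1, r.1, r.2.2) := by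
  obtain ⟨r1, r2, r3⟩ := r; obtain ⟨c1, c2, c3⟩ := c
  simp only [R12, Rmat, ddC, kdC, Prod.mk.injEq]
  split_ifs <;> first | rfl | (exfalso; omega) | ring

lemma R13_eq (N : ℕ) (p : Fin N → ℕ) (q : ℂ) (r c : Fin N × Fin N × Fin N) :
    R13 N p q r c = ddC N p q r.1 r.2.2 * kdC c r +
      (if r.1 < r.2.2 then q - q⁻¹ else 0) * kdC c (r.2.2, r.2.1, r.1) := by
  obtain ⟨r1, r2, r3⟩ := r; obtain ⟨c1, c2, c3⟩ := c
  simp only [R13, Rmat, ddC, kdC, Prod.mk.injEq]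
  split_ifs <;> first | rfl | (exfalso; omega) | ring

lemma R23_eq (N : ℕ) (p : Fin N → ℕ) (q : ℂ) (r c : Fin N × Fin N × Fin N) :
    R23 N p q r c = ddC N p q r.2.1 r.2.2 * kdC c r +
      (if r.2.1 < r.2.2 then q - q⁻¹ else 0) * kdC c (r.1, r.2.2, r.2.1) := by
  obtain ⟨r1, r2, r3⟩ := r; obtain ⟨c1, c2, c3⟩ := c
  simp only [R23, Rmat, ddC, kdC, Prod.mk.injEq]
  split_ifs <;> first | rfl | (exfalso; omega) | ring

lemma mul_apply_sparse {ι : Type*} [Fintype ι] [DecidableEq ι]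
    (A B : Matrix ι ι ℂ) (r r1 r2 : ι) (a b : ℂ)
    (hA : ∀ s, A r s = a * kdC s r1 + b * kdC s r2) (c : ι) :
    (A * B) r c = a * B r1 c + b * B r2 c := by
  simp [Matrix.mul_apply, hA, kdC, add_mul, ite_mul, Finset.sum_add_distrib,
    ← Finset.mul_sum, Finset.sum_ite_eq']

lemma R12_mul (N : ℕ) (p : Fin N → ℕ) (q : ℂ)
    (M : Matrix (Fin N × Fin N × Fin N) (Fin N × Fin N × Fin N) ℂ)
    (r c : Fin N × Fin N × Fin N) :
    (R12 N p q * M) r c = ddC N p q r.1 r.2.1 * M r c +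
      (if r.1 < r.2.1 then q - q⁻¹ else 0) * M (r.2.1, r.1, r.2.2) c :=
  mul_apply_sparse _ _ _ _ _ _ _ (fun s => R12_eq N p q r s) c

lemma R13_mul (N : ℕ) (p : Fin N → ℕ) (q : ℂ)
    (M : Matrix (Fin N × Fin N × Fin N) (Fin N × Fin N × Fin N) ℂ)
    (r c : Fin N × Fin N × Fin N) :
    (R13 N p q * M) r c = ddC N p q r.1 r.2.2 * M r c +
      (if r.1 < r.2.2 then q - q⁻¹ else 0) * M (r.2.2, r.2.1, r.1) c :=
  mul_apply_sparse _ _ _ _ _ _ _ (fun s => R13_eq N p q r s) c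

lemma R23_mul (N : ℕ) (p : Fin N → ℕ) (q : ℂ)
    (M : Matrix (Fin N × Fin N × Fin N) (Fin N × Fin N × Fin N) ℂ)
    (r c : Fin N × Fin N × Fin N) :
    (R23 N p q * M) r c = ddC N p q r.2.1 r.2.2 * M r c +
      (if r.2.1 < r.2.2 then q - q⁻¹ else 0) * M (r.1, r.2.2, r.2.1) c :=
  mul_apply_sparse _ _ _ _ _ _ _ (fun s => R23_eq N p q r s) c

set_option maxHeartbeats 4000000

/-- the GL-type graded R-matrix satisfies the graded Yang–Baxter
equation; equivalently, the associated non-graded matrix `Ř` satisfies the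
ordinary Yang–Baxter equation `R₁₂R₁₃R₂₃ = R₂₃R₁₃R₁₂` on `(ℂ^N)^{⊗3}`. -/
theorem gradedR_YangBaxter (N : ℕ) (hN : 1 ≤ N) (p : Fin N → ℕ)
    (hp : ∀ i, p i ≤ 1) (q : ℂ) (hq : q ≠ 0) (hq4 : q ^ 4 ≠ 1) :
    R12 N p q * R13 N p q * R23 N p q = R23 N p q * R13 N p q * R12 N p q := by
  ext ⟨i, j, k⟩ ⟨l, m, n⟩
  rw [Matrix.mul_assoc, Matrix.mul_assoc]
  simp only [R12_mul, R13_mul, R23_mul, R12_eq, R23_eq]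
  by_cases hij : i = j <;> by_cases hik : i = k <;> by_cases hjk : j = k <;>
  by_cases h1 : i < j <;> by_cases h2 : j < i <;> by_cases h3 : i < k <;>
  by_cases h4 : k < i <;> by_cases h5 : j < k <;> by_cases h6 : k < j <;>
  first
  | (exfalso; omega)
  | ((try simp only [hij, hik, hjk]) <;> split_ifs <;>
     first
     | (exfalso; omega)
     | (rcases Nat.le_one_iff_eq_zero_or_eq_one.mp (hp i) with hpi | hpi <;>
        rcases Nat.le_one_iff_eq_zero_or_eq_one.mp (hp j) with hpj | hpj <;>
        rcases Nat.le_one_iff_eq_zero_or_eq_one.mp (hp k) with hpk | hpk <;>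
        (try simp [ddC, hpi, hpj, hpk]) <;> (try split_ifs) <;>
        first
        | (exfalso; omega)
        | ((try field_simp) <;> (try ring))))
end

section
/- Let Š be the GL-type graded braid matrix and A an even N×N complex matrix. Then the ('tilde') reflection equation Š Ã₂ Š Ã₂ = Ã₂ Š Ã₂ Š, where Ã₂ is the image of 1 ⊗ A under the graded isomorphism φ (so (Ã₂)^{il}_{jk} = (-1)^{[i]([l]+[k])} δ_{ij} A^l_k), is equivalent to the ordinary non-graded reflection equation Š A₂ Š A₂ = A₂ Š A₂ Š with A₂ = id ⊗ A (ordinary tensor product). -/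
open Matrix

/-- `A₂ = id ⊗ A` (ordinary tensor product). -/
def Atwo (N : ℕ) (A : Matrix (Fin N) (Fin N) ℂ) :
    Matrix (Fin N × Fin N) (Fin N × Fin N) ℂ :=
  fun r c => (if r.1 = c.1 then 1 else 0) * A r.2 c.2

/-- `Ã₂ = φ(1 ⊗ A)`: `(Ã₂)^{il}_{jk} = (-1)^{[i]([l]+[k])} δ_{ij} A^l_k`. -/
noncomputable def Atilde (N : ℕ) (p : Fin N → ℕ) (A : Matrix (Fin N) (Fin N) ℂ) :
    Matrix (Fin N × Fin N) (Fin N × Fin N) ℂ :=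
  fun r c => ((-1 : ℂ)) ^ (p r.1 * (p r.2 + p c.2)) *
    (if r.1 = c.1 then 1 else 0) * A r.2 c.2

/-- for an even matrix `A`, the graded ('tilde') reflection
equation `Š Ã₂ Š Ã₂ = Ã₂ Š Ã₂ Š` is equivalent to the ordinary non-graded
reflection equation `Š A₂ Š A₂ = A₂ Š A₂ Š`. -/
theorem tilde_RE_iff_RE (N : ℕ) (hN : 1 ≤ N) (p : Fin N → ℕ)
    (hp : ∀ i, p i ≤ 1) (q : ℂ) (hq : q ≠ 0)
    (A : Matrix (Fin N) (Fin N) ℂ)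
    (heven : ∀ i j : Fin N, p i ≠ p j → A i j = 0) :
    (braidS N p q * Atilde N p A * braidS N p q * Atilde N p A =
      Atilde N p A * braidS N p q * Atilde N p A * braidS N p q) ↔
    (braidS N p q * Atwo N A * braidS N p q * Atwo N A =
      Atwo N A * braidS N p q * Atwo N A * braidS N p q) := by
  have h : Atilde N p A = Atwo N A := by
    ext ⟨i, l⟩ ⟨j, k⟩
    by_cases hlk : p l = p k
    · have hE : Even (p l + p k) := by rw [hlk]; exact ⟨p k, rfl⟩
      simp [Atilde, Atwo, (hE.mul_left (p i)).neg_one_pow]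
    · simp [Atilde, Atwo, heven l k hlk]
  rw [h]
end
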